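/- arXiv:2603.17517 — 2 statements merged into one kernel-verified Lean document; each statement's English description precedes it below -/
import Mathlib

section
/- Let A be a free abelian group of finite rank and R a finitely generated commutative ℂ-algebra equipped with an A-grading. Then for any subgroup B ≤ A, the graded subalgebra R_B := ⊕_{b ∈ B} R_b is also a finitely generated ℂ-algebra. -/
/-!
Choose finitely many homogeneous generators `g i` of `R`, of degrees `d i`. Every element of `R`
is a linear combination of monomials `∏ g i ^ m i`, and such a monomial is homogeneous of degree
`weight d m = ∑ m i • d i`; so `R_B` is spanned by the monomials whose exponent `m` lies in the
submonoid `weight d ⁻¹' B` of `ℕ^ι`. Because `B` is a subgroup, this submonoid is closed under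
truncated subtraction, hence (Gordan's lemma) generated by its minimal nonzero elements, which are
finitely many by Dickson's lemma. The corresponding finitely many monomials generate `R_B`.
-/

open MvPolynomial DirectSum

namespace AddSubmonoid

variable {α : Type*} [AddCommMonoid α] [PartialOrder α] [CanonicallyOrderedAdd α] [Sub α]
  [OrderedSub α] [IsLeftCancelAdd α] [WellQuasiOrderedLE α]

theorem fg_of_tsub_mem (M : AddSubmonoid α) (hM : ∀ m ∈ M, ∀ c ∈ M, c ≤ m → m - c ∈ M) :
    M.FG := by
  set C := {c | Minimal (· ∈ (M : Set α) \ {0}) c}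
  have hC : C.Finite := (setOfPred_minimal_antichain _).finite_of_partiallyWellOrderedOn
    (Set.isPWO_of_wellQuasiOrderedLE C)
  refine ⟨hC.toFinset, le_antisymm (closure_le.2 ?_) fun m hm => ?_⟩
  · intro c hc
    exact ((Set.Finite.mem_toFinset hC).1 hc).prop.1
  induction m using WellFoundedLT.induction with
  | _ m ih =>
  rcases eq_or_ne m 0 with rfl | hm0
  · exact zero_mem _
  obtain ⟨c, hcm, hc⟩ := (Set.isPWO_of_wellQuasiOrderedLE _).exists_le_minimal
    (show m ∈ (M : Set α) \ {0} from ⟨hm, hm0⟩)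
  have hlt : m - c < m := tsub_le_self.lt_of_ne fun h => hc.prop.2 <|
    add_left_cancel (a := m - c) (by rw [tsub_add_cancel_of_le hcm, add_zero, h])
  rw [← tsub_add_cancel_of_le hcm]
  exact add_mem (ih _ hlt (hM m hm c hc.prop.1 hcm))
    (subset_closure ((Set.Finite.mem_toFinset hC).2 hc))

theorem fg_comap_toAddSubmonoid {A : Type*} [AddCommGroup A] (φ : α →+ A) (B : AddSubgroup A) :
    (B.toAddSubmonoid.comap φ).FG := by
  refine fg_of_tsub_mem _ fun m hm c hc hcm => ?_
  have hφ : φ (m - c) = φ m - φ c := by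
    rw [eq_sub_iff_add_eq, ← map_add, tsub_add_cancel_of_le hcm]
  show φ (m - c) ∈ B
  rw [hφ]
  exact B.sub_mem hm hc

end AddSubmonoid

section Graded

variable {K R A : Type*} [CommSemiring K] [CommSemiring R] [Algebra K R]
  [AddCommMonoid A] [DecidableEq A] (ℳ : A → Submodule K R) [GradedAlgebra ℳ]

theorem GradedAlgebra.exists_finset_adjoin_eq_top_and_homogeneous_of_finiteType
    [Algebra.FiniteType K R] :
    ∃ s : Finset R, Algebra.adjoin K (s : Set R) = ⊤ ∧
      ∀ x ∈ s, SetLike.IsHomogeneousElem ℳ x := by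
  classical
  obtain ⟨F, hF⟩ := Algebra.FiniteType.out (R := K) (A := R)
  let ι₀ := Σ x : F, (decompose ℳ x.1).support
  let x (i : ι₀) : R := decompose ℳ i.1 i.2
  refine ⟨Finset.univ.image x, ?_,
    by simpa using fun f ↦ ⟨_, (decompose ℳ f.1 f.2).2⟩⟩
  rw [← top_le_iff, ← hF, Algebra.adjoin_le_iff]
  intro t ht
  rw [← sum_support_decompose ℳ t]
  exact sum_mem fun n hn ↦ Algebra.subset_adjoin (by simpa using ⟨⟨⟨t, ht⟩, n, hn⟩, rfl⟩)

variable {ι : Type*} {g : ι → R} {d : ι → A}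

theorem MvPolynomial.aeval_monomial_mem_graded (hg : ∀ i, g i ∈ ℳ (d i)) (m : ι →₀ ℕ) (c : K) :
    aeval g (monomial m c) ∈ ℳ (Finsupp.weight d m) := by
  rw [aeval_monomial, ← Algebra.smul_def]
  exact Submodule.smul_mem _ _ (SetLike.prod_pow_mem_graded ℳ d g m fun i _ => hg i)

theorem MvPolynomial.aeval_monomial_one_mem_adjoin {C : Set (ι →₀ ℕ)} {m : ι →₀ ℕ}
    (hm : m ∈ AddSubmonoid.closure C) :
    aeval g (monomial m (1 : K)) ∈
      Algebra.adjoin K ((fun m => aeval g (monomial m (1 : K))) '' C) := by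
  induction hm using AddSubmonoid.closure_induction with
  | mem m hm => exact Algebra.subset_adjoin ⟨m, hm, rfl⟩
  | zero => simp
  | add m m' _ _ hm hm' =>
    rw [show monomial (m + m') (1 : K) = monomial m 1 * monomial m' 1 by
      rw [monomial_mul, mul_one], map_mul]
    exact Subalgebra.mul_mem _ hm hm'

theorem GradedAlgebra.decompose_mem_span_aeval_monomial (hg : ∀ i, g i ∈ ℳ (d i))
    (htop : Algebra.adjoin K (Set.range g) = ⊤) (r : R) (a : A) :
    (decompose ℳ r a : R) ∈ Submodule.span K
      ((fun m => aeval g (monomial m (1 : K))) '' {m | Finsupp.weight d m = a}) := by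
  obtain ⟨p, rfl⟩ : ∃ p : MvPolynomial ι K, aeval g p = r := by
    rw [← AlgHom.mem_range, ← Algebra.adjoin_range_eq_range_aeval, htop]
    exact Algebra.mem_top
  rw [p.as_sum, map_sum, decompose_sum, DFinsupp.finsetSum_apply,
    AddSubmonoidClass.coe_finsetSum]
  refine sum_mem fun m _ => ?_
  by_cases hma : Finsupp.weight d m = a
  · subst hma
    rw [decompose_of_mem_same ℳ (aeval_monomial_mem_graded ℳ hg m _),
      ← mul_one (coeff m p), ← smul_eq_mul, ← smul_monomial, map_smul]
    exact Submodule.smul_mem _ _ (Submodule.subset_span ⟨m, rfl, rfl⟩)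
  · rw [decompose_of_mem_ne ℳ (aeval_monomial_mem_graded ℳ hg m _) hma]
    exact zero_mem _

end Graded

theorem GradedAlgebra.mem_adjoin_aeval_monomial_of_decompose_eq_zero {K R A ι : Type*}
    [CommSemiring K] [CommSemiring R] [Algebra K R] [AddCommGroup A] [DecidableEq A]
    (ℳ : A → Submodule K R) [GradedAlgebra ℳ] {g : ι → R} {d : ι → A}
    (hg : ∀ i, g i ∈ ℳ (d i)) (htop : Algebra.adjoin K (Set.range g) = ⊤)
    {B : AddSubgroup A} {C : Set (ι →₀ ℕ)}
    (hC : AddSubmonoid.closure C = B.toAddSubmonoid.comap (Finsupp.weight d))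
    {r : R} (hr : ∀ a ∉ B, (decompose ℳ r a : R) = 0) :
    r ∈ Algebra.adjoin K ((fun m => aeval g (monomial m (1 : K))) '' C) := by
  classical
  rw [← sum_support_decompose ℳ r]
  refine sum_mem fun a _ => ?_
  by_cases ha : a ∈ B
  · rw [← Subalgebra.mem_toSubmodule]
    refine Submodule.span_le.2 ?_ (decompose_mem_span_aeval_monomial ℳ hg htop r a)
    rintro _ ⟨m, rfl, rfl⟩
    exact aeval_monomial_one_mem_adjoin (by rwa [hC])
  · rw [hr a ha]
    exact zero_mem _

theorem graded_subalgebra_finiteType_general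
    (A : Type*) [AddCommGroup A] [DecidableEq A]
    (R : Type*) [CommRing R] [Algebra ℂ R] [Algebra.FiniteType ℂ R]
    (ℳ : A → Submodule ℂ R) [GradedAlgebra ℳ]
    (B : AddSubgroup A)
    (S : Subalgebra ℂ R)
    (hS : (S : Set R) =
      {r : R | ∀ a : A, a ∉ B → (DirectSum.decompose ℳ r a : R) = 0}) :
    Algebra.FiniteType ℂ S := by
  classical
  obtain ⟨s, hs_top, hs_hom⟩ :=
    GradedAlgebra.exists_finset_adjoin_eq_top_and_homogeneous_of_finiteType ℳ
  choose d hd using fun x : s => hs_hom x x.2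
  have hg_top : Algebra.adjoin ℂ (Set.range ((↑) : s → R)) = ⊤ := by
    rwa [Subtype.range_coe]
  obtain ⟨C, hC⟩ := AddSubmonoid.fg_comap_toAddSubmonoid (Finsupp.weight d : (s →₀ ℕ) →+ A) B
  refine (Subalgebra.fg_iff_finiteType S).mp
    ⟨C.image fun m => aeval ((↑) : s → R) (monomial m (1 : ℂ)), le_antisymm ?_ fun r hr => ?_⟩
  · rw [Finset.coe_image, Algebra.adjoin_le_iff]
    rintro _ ⟨c, hc, rfl⟩
    have hcB : Finsupp.weight d c ∈ B := hC.le (AddSubmonoid.subset_closure hc)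
    rw [hS]
    exact fun a ha => decompose_of_mem_ne ℳ (aeval_monomial_mem_graded ℳ hd c 1)
      fun h => ha (h ▸ hcB)
  · rw [Finset.coe_image]
    refine GradedAlgebra.mem_adjoin_aeval_monomial_of_decompose_eq_zero ℳ hd hg_top hC ?_
    rwa [← SetLike.mem_coe, hS] at hr

/-- If `R` is a finitely generated commutative `ℂ`-algebra graded by a
free abelian group `A` of finite rank, and `B ≤ A` is a subgroup, then the graded
subalgebra `R_B = ⊕_{b ∈ B} R_b` is a finitely generated `ℂ`-algebra. -/
theorem graded_subalgebra_finiteType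
    (A : Type*) [AddCommGroup A] [DecidableEq A]
    [Module.Free ℤ A] [Module.Finite ℤ A]
    (R : Type*) [CommRing R] [Algebra ℂ R] [Algebra.FiniteType ℂ R]
    (ℳ : A → Submodule ℂ R) [GradedAlgebra ℳ]
    (B : AddSubgroup A)
    (S : Subalgebra ℂ R)
    (hS : (S : Set R) =
      {r : R | ∀ a : A, a ∉ B → (DirectSum.decompose ℳ r a : R) = 0}) :
    Algebra.FiniteType ℂ S :=
  graded_subalgebra_finiteType_general A R ℳ B S hS
end

section
/- Let R be a finitely generated commutative ℂ-algebra graded by ℤⁿ, and let B ≤ ℤⁿ be a subgroup. Then the degree-zero part R_0 := R_{(0)} (the homogeneous component of degree 0) is a finitely generated ℂ-algebra. -/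
/-!
Pick finitely many homogeneous generators `xᵢ ∈ ℳ dᵢ`, so that `A` is a quotient of a polynomial
ring in which `Xᵢ` has weight `dᵢ`; projecting to degree `0` then amounts to taking the weight-`0`
component of a polynomial. The exponents of weight `0` are the kernel of a monoid map `ℕ^k → ι`,
finitely generated by Gordan's lemma, and the images of the corresponding monomials generate `ℳ 0`.
-/

open MvPolynomial

theorem AddMonoidHom.fg_mker {M N : Type*} [AddCommMonoid M] [PartialOrder M]
    [WellQuasiOrderedLE M] [IsOrderedCancelAddMonoid M] [CanonicallyOrderedAdd M] [AddMonoid N]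
    (f : M →+ N) : (AddMonoidHom.mker f).FG :=
  AddSubmonoid.fg_of_subtractive fun x hx y hxy => by
    rwa [AddMonoidHom.mem_mker, map_add, AddMonoidHom.mem_mker.1 hx, zero_add] at hxy

namespace MvPolynomial

variable {R σ : Type*} [CommSemiring R]

theorem monomial_one_mem_adjoin_of_mem_closure {T : Set (σ →₀ ℕ)} {a : σ →₀ ℕ}
    (ha : a ∈ AddSubmonoid.closure T) :
    monomial a (1 : R) ∈ Algebra.adjoin R ((monomial · (1 : R)) '' T) := by
  induction ha using AddSubmonoid.closure_induction with
  | mem t ht => exact Algebra.subset_adjoin ⟨t, ht, rfl⟩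
  | zero => exact one_mem _
  | add a b _ _ ha hb =>
    simpa only [monomial_mul, mul_one] using mul_mem ha hb

theorem IsWeightedHomogeneous.mem_adjoin_monomial {M : Type*} [AddCommMonoid M] {w : σ → M}
    {T : Set (σ →₀ ℕ)} (hT : AddMonoidHom.mker (Finsupp.weight w) ≤ AddSubmonoid.closure T)
    {p : MvPolynomial σ R} (hp : p.IsWeightedHomogeneous w 0) :
    p ∈ Algebra.adjoin R ((monomial · (1 : R)) '' T) := by
  induction hp using IsWeightedHomogeneous.induction_on with
  | zero => exact zero_mem _
  | add p q _ _ hp hq => exact add_mem hp hq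
  | monomial a c ha =>
    rw [← mul_one c, ← smul_eq_mul, ← smul_monomial]
    exact Subalgebra.smul_mem _ (monomial_one_mem_adjoin_of_mem_closure (hT ha)) c

end MvPolynomial

namespace GradedAlgebra

variable {R A ι : Type*} [CommSemiring R] [CommSemiring A] [Algebra R A] [AddCommMonoid ι]
  [DecidableEq ι] (ℳ : ι → Submodule R A) [GradedAlgebra ℳ]

theorem exists_finset_homogeneous_adjoin_eq_top [Algebra.FiniteType R A] :
    ∃ s : Finset A, Algebra.adjoin R (s : Set A) = ⊤ ∧
      ∀ a ∈ s, SetLike.IsHomogeneousElem ℳ a := by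
  classical
  obtain ⟨F, hF⟩ := Algebra.FiniteType.out (R := R) (A := A)
  refine ⟨F.biUnion fun a => (DirectSum.decompose ℳ a).support.image
    fun i => (DirectSum.decompose ℳ a i : A), ?_, ?_⟩
  · rw [← top_le_iff, ← hF, Algebra.adjoin_le_iff]
    intro a ha
    rw [← DirectSum.sum_support_decompose ℳ a]
    exact sum_mem fun i hi => Algebra.subset_adjoin
      (Finset.mem_coe.2 (Finset.mem_biUnion.2 ⟨a, ha, Finset.mem_image_of_mem _ hi⟩))
  · simp only [Finset.mem_biUnion, Finset.mem_image]
    rintro _ ⟨a, -, i, -, rfl⟩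
    exact ⟨i, SetLike.coe_mem _⟩

variable {ℳ} {σ : Type*} {x : σ → A} {d : σ → ι}

theorem aeval_monomial_mem (hx : ∀ i, x i ∈ ℳ (d i)) (a : σ →₀ ℕ) (c : R) :
    aeval x (monomial a c) ∈ ℳ (Finsupp.weight d a) := by
  rw [aeval_monomial, ← Algebra.smul_def, Finsupp.weight_apply, Finsupp.sum, Finsupp.prod]
  exact Submodule.smul_mem _ c (SetLike.prod_pow_mem_graded ℳ d x a fun i _ => hx i)

theorem proj_aeval (hx : ∀ i, x i ∈ ℳ (d i)) (m : ι) (p : MvPolynomial σ R) :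
    proj ℳ m (aeval x p) = aeval x (weightedHomogeneousComponent d m p) := by
  induction p using MvPolynomial.induction_on' with
  | monomial a c =>
    rw [weightedHomogeneousComponent_of_mem (isWeightedHomogeneous_monomial d a c rfl), proj_apply]
    split_ifs with h
    · exact DirectSum.decompose_of_mem_same ℳ (h ▸ aeval_monomial_mem hx a c)
    · rw [map_zero]
      exact DirectSum.decompose_of_mem_ne ℳ (aeval_monomial_mem hx a c) (Ne.symm h)
  | add p q hp hq => simp only [map_add, hp, hq]

variable (ℳ)

theorem finiteType_gradeZero_subalgebra [Algebra.FiniteType R A] :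
    Algebra.FiniteType R (SetLike.GradeZero.subalgebra ℳ) := by
  classical
  obtain ⟨s, hs, hhom⟩ := exists_finset_homogeneous_adjoin_eq_top ℳ
  choose d hd using fun a : s => hhom a a.2
  obtain ⟨T, hT⟩ := AddMonoidHom.fg_mker (Finsupp.weight d : (s →₀ ℕ) →+ ι)
  set x : s → A := (↑)
  have hsurj : Function.Surjective (aeval (R := R) x) := by
    rw [← AlgHom.range_eq_top, ← Algebra.adjoin_range_eq_range_aeval, Subtype.range_coe, hs]
  rw [← Subalgebra.fg_iff_finiteType]
  refine ⟨T.image fun t => aeval x (monomial t (1 : R)), le_antisymm ?_ fun r hr => ?_⟩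
  · rw [Algebra.adjoin_le_iff, Finset.coe_image]
    rintro _ ⟨t, ht, rfl⟩
    have ht0 : Finsupp.weight d t = 0 := hT.le (AddSubmonoid.subset_closure ht)
    have := aeval_monomial_mem hd t (1 : R)
    rwa [ht0] at this
  · obtain ⟨p, rfl⟩ := hsurj r
    rw [← DirectSum.decompose_of_mem_same ℳ hr, ← proj_apply, proj_aeval hd, Finset.coe_image,
      ← Set.image_image (aeval x) (monomial · 1), ← AlgHom.map_adjoin]
    exact Subalgebra.mem_map.2 ⟨_, (weightedHomogeneousComponent_isWeightedHomogeneous 0 p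
      |>.mem_adjoin_monomial hT.ge), rfl⟩

end GradedAlgebra

theorem degree_zero_part_finiteType_general
    (n : ℕ)
    (R : Type*) [CommRing R] [Algebra ℂ R] [Algebra.FiniteType ℂ R]
    (ℳ : (Fin n → ℤ) → Submodule ℂ R) [GradedAlgebra ℳ] :
    ∃ S : Subalgebra ℂ R, (S : Set R) = (ℳ 0 : Set R) ∧ Algebra.FiniteType ℂ S :=
  ⟨SetLike.GradeZero.subalgebra ℳ, rfl, GradedAlgebra.finiteType_gradeZero_subalgebra ℳ⟩

/-- If `R` is a finitely generated commutative `ℂ`-algebra graded by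
`ℤⁿ` (and `B ≤ ℤⁿ` is any subgroup), then the degree-zero homogeneous component
`R_0` is a finitely generated `ℂ`-algebra. -/
theorem degree_zero_part_finiteType
    (n : ℕ)
    (R : Type*) [CommRing R] [Algebra ℂ R] [Algebra.FiniteType ℂ R]
    (ℳ : (Fin n → ℤ) → Submodule ℂ R) [GradedAlgebra ℳ]
    (B : AddSubgroup (Fin n → ℤ)) :
    ∃ S : Subalgebra ℂ R, (S : Set R) = (ℳ 0 : Set R) ∧ Algebra.FiniteType ℂ S :=
  degree_zero_part_finiteType_general n R ℳ
end
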